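/- In the sedenions, with A = (1/2)(i_3 + i_10), B = (1/2)(i_6 + i_15), C = (1/2)(i_5 + i_12), the cyclic 'sign-switched' products satisfy A·B = C, B·C = A, and C·A = B, while A² = B² = C² = −1/2. -/

import Mathlib

/-- The Cayley-Dickson tower of algebras over ℝ: `CD n` has dimension `2^n`. -/
def CD : ℕ → Type
  | 0 => ℝ
  | n+1 => CD n × CD n

noncomputable instance instCDAddCommGroup : (n : ℕ) → AddCommGroup (CD n)
  | 0 => inferInstanceAs (AddCommGroup ℝ)
  | n+1 => @Prod.instAddCommGroup _ _ (instCDAddCommGroup n) (instCDAddCommGroup n)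

/-- Cayley-Dickson conjugation. -/
noncomputable def CD.conj : {n : ℕ} → CD n → CD n
  | 0, x => x
  | _+1, (a, b) => (CD.conj a, -b)

/-- Cayley-Dickson multiplication: `(a,b)(c,d) = (ac − d* b, da + b c*)`. -/
noncomputable def CD.mul : {n : ℕ} → CD n → CD n → CD n
  | 0, x, y => (show ℝ from x) * (show ℝ from y)
  | _+1, (a, b), (c, d) =>
      (CD.mul a c - CD.mul (CD.conj d) b, CD.mul d a + CD.mul b (CD.conj c))

/-- The standard basis unit `i_k` of `CD n`, for `k < 2^n`. -/
noncomputable def CD.e : (n : ℕ) → ℕ → CD n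
  | 0, _ => (1 : ℝ)
  | n+1, k => if k < 2^n then (CD.e n k, 0) else (0, CD.e n (k - 2^n))


noncomputable instance instCDModule : (n : ℕ) → Module ℝ (CD n)
  | 0 => inferInstanceAs (Module ℝ ℝ)
  | n+1 =>
      letI := instCDModule n
      inferInstanceAs (Module ℝ (CD n × CD n))

/-!
The basis units of a Cayley–Dickson algebra multiply as `e i * e j = ± e (i ^^^ j)`, the sign
being computed by a recursion that mirrors the four cases of the doubling formula. Expanding the
products bilinearly, each identity reduces to four such products.
-/

theorem Nat.two_pow_add_eq_xor {n a : ℕ} (h : a < 2 ^ n) : 2 ^ n + a = 2 ^ n ^^^ a := by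
  apply Nat.eq_of_testBit_eq
  intro k
  rw [Nat.testBit_xor, Nat.testBit_two_pow]
  rcases lt_trichotomy k n with hk | rfl | hk
  · simp [Nat.testBit_two_pow_add_gt hk, hk.ne']
  · simp [Nat.testBit_two_pow_add_eq, Nat.testBit_lt_two_pow h]
  · have h2 : 2 ^ n + a < 2 ^ k := by
      calc 2 ^ n + a < 2 ^ (n + 1) := by rw [pow_succ]; omega
        _ ≤ 2 ^ k := Nat.pow_le_pow_right two_pos hk
    have h1 : a < 2 ^ k := (Nat.le_add_left a _).trans_lt h2
    simp [Nat.testBit_lt_two_pow h2, Nat.testBit_lt_two_pow h1, hk.ne]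

theorem Nat.lt_two_pow_or_exists_eq_two_pow_add {n k : ℕ} (hk : k < 2 ^ (n + 1)) :
    k < 2 ^ n ∨ ∃ k' < 2 ^ n, k = 2 ^ n + k' := by
  rw [pow_succ] at hk
  rcases lt_or_ge k (2 ^ n) with h | h
  · exact .inl h
  · exact .inr ⟨k - 2 ^ n, by omega, by omega⟩

namespace CD

def ofReal (x : ℝ) : CD 0 := x

def mk {n : ℕ} (a b : CD n) : CD (n + 1) := (a, b)

theorem exists_eq_mk {n : ℕ} (x : CD (n + 1)) : ∃ a b : CD n, x = mk a b :=
  ⟨(x : CD n × CD n).1, (x : CD n × CD n).2, rfl⟩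

theorem conj_ofReal (r : ℝ) : conj (ofReal r) = ofReal r := rfl
theorem mul_ofReal (r s : ℝ) : mul (ofReal r) (ofReal s) = ofReal (r * s) := rfl

variable {n : ℕ}

theorem mk_add_mk (a b c d : CD n) : mk a b + mk c d = mk (a + c) (b + d) := rfl
theorem neg_mk (a b : CD n) : -mk a b = mk (-a) (-b) := rfl
theorem smul_mk (r : ℝ) (a b : CD n) : r • mk a b = mk (r • a) (r • b) := rfl
theorem conj_mk (a b : CD n) : conj (mk a b) = mk (conj a) (-b) := rfl
theorem mk_mul_mk (a b c d : CD n) :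
    mul (mk a b) (mk c d) = mk (mul a c - mul (conj d) b) (mul d a + mul b (conj c)) := rfl

theorem conj_add (x y : CD n) : conj (x + y) = conj x + conj y := by
  induction n with
  | zero => rfl
  | succ n ih =>
    obtain ⟨a, b, rfl⟩ := exists_eq_mk x
    obtain ⟨c, d, rfl⟩ := exists_eq_mk y
    rw [mk_add_mk, conj_mk, conj_mk, conj_mk, mk_add_mk, ih, neg_add]

theorem conj_smul (r : ℝ) (x : CD n) : conj (r • x) = r • conj x := by
  induction n with
  | zero => rfl
  | succ n ih =>
    obtain ⟨a, b, rfl⟩ := exists_eq_mk x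
    rw [smul_mk, conj_mk, conj_mk, smul_mk, ih, smul_neg]

theorem mul_add_and_add_mul (n : ℕ) :
    (∀ x y z : CD n, mul x (y + z) = mul x y + mul x z) ∧
    (∀ x y z : CD n, mul (x + y) z = mul x z + mul y z) := by
  induction n with
  | zero => exact ⟨fun x y z => mul_add (R := ℝ) x y z, fun x y z => add_mul (R := ℝ) x y z⟩
  | succ n ih =>
    constructor <;> intro x y z <;>
    · obtain ⟨a, b, rfl⟩ := exists_eq_mk x
      obtain ⟨c, d, rfl⟩ := exists_eq_mk y
      obtain ⟨e, f, rfl⟩ := exists_eq_mk z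
      simp only [mk_add_mk, mk_mul_mk, conj_add, ih.1, ih.2]
      congr 1 <;> abel

theorem mul_smul_and_smul_mul (n : ℕ) :
    (∀ (r : ℝ) (x y : CD n), mul x (r • y) = r • mul x y) ∧
    (∀ (r : ℝ) (x y : CD n), mul (r • x) y = r • mul x y) := by
  induction n with
  | zero =>
    exact ⟨fun r x y => mul_left_comm (G := ℝ) x r y, fun r x y => mul_assoc (G := ℝ) r x y⟩
  | succ n ih =>
    constructor <;> intro r x y <;>
    · obtain ⟨a, b, rfl⟩ := exists_eq_mk x
      obtain ⟨c, d, rfl⟩ := exists_eq_mk y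
      simp only [smul_mk, mk_mul_mk, conj_smul, ih.1, ih.2, smul_sub, smul_add]

theorem mul_add (x y z : CD n) : mul x (y + z) = mul x y + mul x z :=
  (mul_add_and_add_mul n).1 x y z

theorem add_mul (x y z : CD n) : mul (x + y) z = mul x z + mul y z :=
  (mul_add_and_add_mul n).2 x y z

theorem mul_smul (r : ℝ) (x y : CD n) : mul x (r • y) = r • mul x y :=
  (mul_smul_and_smul_mul n).1 r x y

theorem smul_mul (r : ℝ) (x y : CD n) : mul (r • x) y = r • mul x y :=
  (mul_smul_and_smul_mul n).2 r x y

theorem mul_zero (x : CD n) : mul x 0 = 0 := by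
  simpa using mul_smul 0 x 0

theorem zero_mul (x : CD n) : mul 0 x = 0 := by
  simpa using smul_mul 0 0 x

theorem conj_zero : conj (0 : CD n) = 0 := by
  simpa using conj_smul 0 (0 : CD n)

theorem e_zero_eq (k : ℕ) : e 0 k = ofReal 1 := rfl

theorem e_succ_of_lt {k : ℕ} (hk : k < 2 ^ n) : e (n + 1) k = mk (e n k) 0 := if_pos hk

theorem e_succ_of_le {k : ℕ} (hk : 2 ^ n ≤ k) : e (n + 1) k = mk 0 (e n (k - 2 ^ n)) :=
  if_neg (Nat.not_lt.2 hk)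

theorem e_succ_two_pow_add (k : ℕ) : e (n + 1) (2 ^ n + k) = mk 0 (e n k) := by
  rw [e_succ_of_le (Nat.le_add_right _ _), Nat.add_sub_cancel_left]

def conjSign (k : ℕ) : ℤ := if k = 0 then 1 else -1

theorem conj_e {k : ℕ} (hk : k < 2 ^ n) : conj (e n k) = (conjSign k : ℝ) • e n k := by
  induction n generalizing k with
  | zero => simp [conjSign, show k = 0 by simpa using hk, e_zero_eq, conj_ofReal]
  | succ n ih =>
    rcases lt_or_ge k (2 ^ n) with hk' | hk'
    · rw [e_succ_of_lt hk', conj_mk, ih hk', neg_zero, smul_mk, smul_zero]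
    · have hk0 : k ≠ 0 := ((Nat.two_pow_pos n).trans_le hk').ne'
      rw [e_succ_of_le hk', conj_mk, conj_zero, smul_mk, smul_zero, conjSign, if_neg hk0]
      simp

def mulSign : ℕ → ℕ → ℕ → ℤ
  | 0, _, _ => 1
  | n + 1, i, j =>
    if i < 2 ^ n then
      if j < 2 ^ n then mulSign n i j else mulSign n (j - 2 ^ n) i
    else if j < 2 ^ n then conjSign j * mulSign n (i - 2 ^ n) j
    else -(conjSign (j - 2 ^ n) * mulSign n (j - 2 ^ n) (i - 2 ^ n))

theorem e_mul_e {i j : ℕ} (hi : i < 2 ^ n) (hj : j < 2 ^ n) :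
    mul (e n i) (e n j) = (mulSign n i j : ℝ) • e n (i ^^^ j) := by
  induction n generalizing i j with
  | zero =>
    obtain rfl : i = 0 := by simpa using hi
    obtain rfl : j = 0 := by simpa using hj
    simp [e_zero_eq, mul_ofReal, mulSign]
  | succ n ih =>
    have hxor {a} (ha : a < 2 ^ n) : 2 ^ n + a = 2 ^ n ^^^ a := Nat.two_pow_add_eq_xor ha
    rcases Nat.lt_two_pow_or_exists_eq_two_pow_add hi with hi' | ⟨i, hi', rfl⟩ <;>
      rcases Nat.lt_two_pow_or_exists_eq_two_pow_add hj with hj' | ⟨j, hj', rfl⟩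
    · rw [e_succ_of_lt hi', e_succ_of_lt hj', e_succ_of_lt (Nat.xor_lt_two_pow hi' hj'), mk_mul_mk,
        ih hi' hj']
      simp [mulSign, hi', hj', smul_mk, conj_zero, mul_zero, zero_mul]
    · have : i ^^^ (2 ^ n + j) = 2 ^ n + (j ^^^ i) := by
        rw [hxor hj', hxor (Nat.xor_lt_two_pow hj' hi')]; ac_rfl
      rw [e_succ_of_lt hi', e_succ_two_pow_add, this, e_succ_two_pow_add, mk_mul_mk, ih hj' hi']
      simp [mulSign, hi', smul_mk, conj_zero, mul_zero]
    · have : (2 ^ n + i) ^^^ j = 2 ^ n + (i ^^^ j) := by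
        rw [hxor hi', hxor (Nat.xor_lt_two_pow hi' hj')]; ac_rfl
      rw [e_succ_of_lt hj', e_succ_two_pow_add, this, e_succ_two_pow_add, mk_mul_mk, conj_e hj',
        mul_smul, ih hi' hj']
      simp [mulSign, hj', smul_mk, conj_zero, mul_zero, zero_mul, smul_smul]
    · have : (2 ^ n + i) ^^^ (2 ^ n + j) = j ^^^ i := by
        rw [hxor hi', hxor hj', Nat.xor_assoc, Nat.xor_left_comm i, Nat.xor_xor_cancel_left,
          Nat.xor_comm]
      rw [e_succ_two_pow_add, e_succ_two_pow_add, this, e_succ_of_lt (Nat.xor_lt_two_pow hj' hi'),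
        mk_mul_mk, conj_e hj', smul_mul, ih hj' hi']
      simp [mulSign, smul_mk, neg_mk, conj_zero, mul_zero, smul_smul]

end CD

/-- The half-scaled '/' diagonals of Sail ABC of Box-Kite I satisfy the cyclic products
`A·B = C`, `B·C = A`, `C·A = B`, with `A² = B² = C² = −1/2`. -/
theorem quizzical_quaternion_cycle :
    let A := (1/2 : ℝ) • (CD.e 4 3 + CD.e 4 10)
    let B := (1/2 : ℝ) • (CD.e 4 6 + CD.e 4 15)
    let C := (1/2 : ℝ) • (CD.e 4 5 + CD.e 4 12)
    CD.mul A B = C ∧ CD.mul B C = A ∧ CD.mul C A = B ∧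
    CD.mul A A = -((1/2 : ℝ) • CD.e 4 0) ∧
    CD.mul B B = -((1/2 : ℝ) • CD.e 4 0) ∧
    CD.mul C C = -((1/2 : ℝ) • CD.e 4 0) := by
  intro A B C
  refine ⟨?_, ?_, ?_, ?_, ?_, ?_⟩ <;>
  · simp only [A, B, C, CD.smul_mul, CD.mul_smul, CD.add_mul, CD.mul_add]
    simp (disch := norm_num) only [CD.e_mul_e]
    simp only [CD.mulSign, CD.conjSign, Nat.reducePow, Nat.reduceLT, Nat.reduceSub,
      Nat.reduceEqDiff, ↓reduceIte, Int.reduceMul, Int.reduceNeg, Int.cast_one, Int.cast_neg,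
      Nat.reduceXor]
    module
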